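/- arXiv:2112.10598 — 8 statements merged into one kernel-verified Lean document; each statement's English description precedes it below -/
import Mathlib

section
/- Let 0<ρ<1 and 0<τ<1, and define the surrogate sequence d_0 = 0, d_{k+1} = d_k − log(ρ + τ(1-ρ) e^{−d_k}). Then {d_k} is strictly increasing and satisfies d_k → ∞ as k → ∞. -/
theorem surrogate_sequence_increasing_tendsto_top
    (ρ τ : ℝ) (hρ0 : 0 < ρ) (hρ1 : ρ < 1) (hτ0 : 0 < τ) (hτ1 : τ < 1)
    (d : ℕ → ℝ) (hd0 : d 0 = 0)
    (hd : ∀ k, d (k + 1) = d k - Real.log (ρ + τ * (1 - ρ) * Real.exp (-(d k)))) :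
    StrictMono d ∧ Filter.Tendsto d Filter.atTop Filter.atTop := by
  set b : ℝ := ρ + τ * (1 - ρ) with hb
  have hb0 : 0 < b := by
    have : 0 < τ * (1 - ρ) := mul_pos hτ0 (by linarith)
    linarith
  have hb1 : b < 1 := by
    have : τ * (1 - ρ) < 1 * (1 - ρ) := by
      apply mul_lt_mul_of_pos_right hτ1 (by linarith)
    linarith [this]
  have hc : 0 < -Real.log b := by
    have := Real.log_neg hb0 hb1
    linarith
  set c : ℝ := -Real.log b with hcdef
  -- key: d k ≥ 0 for all k, and step bound
  have hnonneg : ∀ k, 0 ≤ d k := by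
    intro k
    induction k with
    | zero => simp [hd0]
    | succ n ih =>
      rw [hd n]
      have hexp : Real.exp (-(d n)) ≤ 1 := by
        rw [Real.exp_le_one_iff]; linarith
      have hpos : 0 < ρ + τ * (1 - ρ) * Real.exp (-(d n)) := by
        have : 0 < τ * (1 - ρ) * Real.exp (-(d n)) :=
          mul_pos (mul_pos hτ0 (by linarith)) (Real.exp_pos _)
        linarith
      have hle : ρ + τ * (1 - ρ) * Real.exp (-(d n)) ≤ b := by
        have h1 : τ * (1 - ρ) * Real.exp (-(d n)) ≤ τ * (1 - ρ) * 1 :=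
          mul_le_mul_of_nonneg_left hexp (le_of_lt (mul_pos hτ0 (by linarith)))
        rw [hb]; linarith
      have := Real.log_le_log hpos hle
      have hlog : Real.log (ρ + τ * (1 - ρ) * Real.exp (-(d n))) ≤ Real.log b := this
      have := Real.log_neg hb0 hb1
      linarith
  have hstep : ∀ k, d k + c ≤ d (k + 1) := by
    intro k
    rw [hd k]
    have hexp : Real.exp (-(d k)) ≤ 1 := by
      rw [Real.exp_le_one_iff]; linarith [hnonneg k]
    have hpos : 0 < ρ + τ * (1 - ρ) * Real.exp (-(d k)) := by
      have : 0 < τ * (1 - ρ) * Real.exp (-(d k)) :=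
        mul_pos (mul_pos hτ0 (by linarith)) (Real.exp_pos _)
      linarith
    have hle : ρ + τ * (1 - ρ) * Real.exp (-(d k)) ≤ b := by
      have h1 : τ * (1 - ρ) * Real.exp (-(d k)) ≤ τ * (1 - ρ) * 1 :=
        mul_le_mul_of_nonneg_left hexp (le_of_lt (mul_pos hτ0 (by linarith)))
      rw [hb]; linarith
    have hlog : Real.log (ρ + τ * (1 - ρ) * Real.exp (-(d k))) ≤ Real.log b :=
      Real.log_le_log hpos hle
    simp only [hcdef]
    linarith
  constructor
  · apply strictMono_nat_of_lt_succ
    intro n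
    have := hstep n
    linarith [hstep n]
  · have hlb : ∀ k, c * k ≤ d k := by
      intro k
      induction k with
      | zero => simp [hd0]
      | succ n ih =>
        have := hstep n
        push_cast
        linarith
    apply Filter.tendsto_atTop_mono hlb
    exact Filter.Tendsto.const_mul_atTop hc tendsto_natCast_atTop_atTop
end

section
/- Let 0<ρ<1 and 0<τ<1, and define f(x) = 1/(−log(ρ + τ(1-ρ) e^{−x})) for x ≥ 0. Then f is positive, monotonically decreasing, and convex on [0,∞). -/
open Set Real

private lemma myComp {g f : ℝ → ℝ} {s t : Set ℝ} (hg : ConvexOn ℝ t g) (hf : ConcaveOn ℝ s f)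
    (hg' : AntitoneOn g t) (hm : Set.MapsTo f s t) : ConvexOn ℝ s (fun x => g (f x)) :=
  ⟨hf.1, fun x hx y hy a b ha hb hab => by
    have h1 : f (a • x + b • y) ∈ t := hm (hf.1 hx hy ha hb hab)
    have h2 : a • f x + b • f y ∈ t := hg.1 (hm hx) (hm hy) ha hb hab
    calc g (f (a • x + b • y)) ≤ g (a • f x + b • f y) :=
          hg' h2 h1 (hf.2 hx hy ha hb hab)
      _ ≤ a • g (f x) + b • g (f y) := hg.2 (hm hx) (hm hy) ha hb hab⟩

private lemma convexOn_one_div' : ConvexOn ℝ (Set.Ioi (0:ℝ)) (fun u : ℝ => 1 / u) := by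
  have := (strictConvexOn_zpow (m := -1) (by decide) (by decide)).convexOn
  refine this.congr fun u _ => ?_
  simp [one_div, zpow_neg]

private lemma antitoneOn_one_div' : AntitoneOn (fun u : ℝ => 1 / u) (Set.Ioi (0:ℝ)) :=
  fun u hu v _ huv => one_div_le_one_div_of_le hu huv

theorem f_positive_decreasing_convex
    (ρ τ : ℝ) (hρ0 : 0 < ρ) (hρ1 : ρ < 1) (hτ0 : 0 < τ) (hτ1 : τ < 1)
    (f : ℝ → ℝ)
    (hf : ∀ x, f x = 1 / (-Real.log (ρ + τ * (1 - ρ) * Real.exp (-x)))) :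
    (∀ x ∈ Set.Ici (0 : ℝ), 0 < f x) ∧
    AntitoneOn f (Set.Ici (0 : ℝ)) ∧
    ConvexOn ℝ (Set.Ici (0 : ℝ)) f := by
  set c := τ * (1 - ρ) with hc
  have hc0 : 0 < c := mul_pos hτ0 (by linarith)
  set g : ℝ → ℝ := fun x => ρ + c * Real.exp (-x) with hg
  set L : ℝ → ℝ := fun x => -Real.log (g x) with hL
  have hgpos : ∀ x, 0 < g x := fun x =>
    add_pos hρ0 (mul_pos hc0 (Real.exp_pos _))
  have hglt1 : ∀ x ∈ Set.Ici (0:ℝ), g x < 1 := by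
    intro x hx
    have h1 : Real.exp (-x) ≤ 1 := Real.exp_le_one_iff.mpr (by linarith [mem_Ici.mp hx])
    have : c * Real.exp (-x) ≤ c * 1 := by
      exact mul_le_mul_of_nonneg_left h1 hc0.le
    have hclt : c < 1 - ρ := by
      calc c = τ * (1 - ρ) := hc
        _ < 1 * (1 - ρ) := by
            exact mul_lt_mul_of_pos_right hτ1 (by linarith)
        _ = 1 - ρ := one_mul _
    simp only [hg]
    nlinarith
  have hLpos : ∀ x ∈ Set.Ici (0:ℝ), 0 < L x := by
    intro x hx
    have := Real.log_neg (hgpos x) (hglt1 x hx)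
    simp only [hL]; linarith
  have hfeq : ∀ x, f x = 1 / L x := fun x => hf x
  -- monotone of L
  have hLmono : MonotoneOn L (Set.Ici (0:ℝ)) := by
    intro x hx y hy hxy
    have h1 : Real.exp (-y) ≤ Real.exp (-x) := Real.exp_le_exp.mpr (by linarith)
    have h2 : g y ≤ g x := by
      simp only [hg]
      nlinarith
    have := Real.log_le_log (hgpos y) h2
    simp only [hL]; linarith
  constructor
  · intro x hx
    rw [hfeq x]
    exact one_div_pos.mpr (hLpos x hx)
  constructor
  · intro x hx y hy hxy
    rw [hfeq x, hfeq y]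
    exact one_div_le_one_div_of_le (hLpos x hx) (hLmono hx hy hxy)
  -- convexity
  · have hfunext : f = fun x => 1 / L x := funext hfeq
    rw [hfunext]
    -- L is concave on Ici 0
    have hint : interior (Set.Ici (0:ℝ)) = Set.Ioi 0 := interior_Ici
    -- derivatives
    have hgd : ∀ x : ℝ, HasDerivAt g (-(c * Real.exp (-x))) x := by
      intro x
      have h1 : HasDerivAt (fun x : ℝ => -x) (-1) x := (hasDerivAt_id x).neg
      have h2 : HasDerivAt (fun x : ℝ => Real.exp (-x)) (Real.exp (-x) * -1) x := h1.exp
      have h3 := (h2.const_mul c).const_add ρ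
      exact h3.congr_deriv (by ring)
    have hLd : ∀ x : ℝ, HasDerivAt L (c * Real.exp (-x) / g x) x := by
      intro x
      have h1 := ((hgd x).log (hgpos x).ne').neg
      exact h1.congr_deriv (by ring)
    have hL'd : ∀ x : ℝ,
        HasDerivAt (fun x => c * Real.exp (-x) / g x)
          (-(ρ * (c * Real.exp (-x))) / (g x)^2) x := by
      intro x
      have hN : HasDerivAt (fun x : ℝ => c * Real.exp (-x)) (-(c * Real.exp (-x))) x := by
        have h1 : HasDerivAt (fun x : ℝ => -x) (-1) x := (hasDerivAt_id x).neg
        have h2 := (h1.exp).const_mul c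
        exact h2.congr_deriv (by ring)
      have h := hN.div (hgd x) (hgpos x).ne'
      refine h.congr_deriv ?_
      simp only [hg]
      field_simp
      ring
    have hLconc : ConcaveOn ℝ (Set.Ici (0:ℝ)) L := by
      apply concaveOn_of_hasDerivWithinAt2_nonpos (convex_Ici 0)
        (f' := fun x => c * Real.exp (-x) / g x)
        (f'' := fun x => -(ρ * (c * Real.exp (-x))) / (g x)^2)
      · exact fun x _ => ((hLd x).continuousAt).continuousWithinAt
      · exact fun x _ => (hLd x).hasDerivWithinAt
      · exact fun x _ => (hL'd x).hasDerivWithinAt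
      · intro x _
        apply div_nonpos_of_nonpos_of_nonneg
        · have := mul_pos hc0 (Real.exp_pos (-x))
          nlinarith
        · positivity
    exact myComp convexOn_one_div' hLconc antitoneOn_one_div' (fun x hx => hLpos x hx)
end

section
/- Let 0<ρ<1, 0<τ<1, let {d_k} be defined by d_0 = 0 and d_{k+1} = d_k − log(ρ + τ(1-ρ) e^{−d_k}), and let F(x) = ∫_0^x 1/(−log(ρ + τ(1-ρ) e^{−t})) dt. Then for every K ∈ ℕ, K ≤ F(d_K) + (1/(2ρ)) · log( log(ρ) / log(ρ + τ(1-ρ)) ). -/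
private lemma exp_wsum (p q s : ℝ) (hp : 0 ≤ p) (hq : 0 ≤ q) (hpq : p + q = 1) :
    Real.exp (-(q * s)) ≤ p + q * Real.exp (-s) := by
  have h := convexOn_exp.2 (Set.mem_univ (0:ℝ)) (Set.mem_univ (-s)) hp hq hpq
  simpa [mul_comm] using h

private lemma gc_step (ρ c a t : ℝ) (hρ : 0 < ρ) (hc : 0 < c) (hat : a ≤ t) :
    -Real.log (ρ + c * Real.exp (-t)) + Real.log (ρ + c * Real.exp (-a))
      ≤ (1 - ρ / (ρ + c * Real.exp (-a))) * (t - a) := by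
  set H := ρ + c * Real.exp (-a) with hHdef
  have hH0 : 0 < H := by positivity
  have ht0 : 0 < ρ + c * Real.exp (-t) := by positivity
  have hexp : Real.exp (-t) = Real.exp (-a) * Real.exp (-(t - a)) := by
    rw [← Real.exp_add]; ring_nf
  have hsplit : ρ + c * Real.exp (-t)
      = (ρ / H + (c * Real.exp (-a) / H) * Real.exp (-(t - a))) * H := by
    field_simp [hexp]; rw [mul_assoc, ← hexp]
  have key := exp_wsum (ρ / H) (c * Real.exp (-a) / H) (t - a)
    (by positivity) (by positivity) (by field_simp; exact hHdef.symm)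
  have hpos : (0:ℝ) < ρ / H + (c * Real.exp (-a) / H) * Real.exp (-(t - a)) := by positivity
  have hlog : -(c * Real.exp (-a) / H * (t - a))
      ≤ Real.log (ρ / H + (c * Real.exp (-a) / H) * Real.exp (-(t - a))) := by
    calc -(c * Real.exp (-a) / H * (t - a))
        = Real.log (Real.exp (-(c * Real.exp (-a) / H * (t - a)))) := (Real.log_exp _).symm
      _ ≤ _ := Real.log_le_log (Real.exp_pos _) key
  have hq : 1 - ρ / H = c * Real.exp (-a) / H := by field_simp; rw [hHdef]; ring
  rw [hsplit, Real.log_mul hpos.ne' hH0.ne', hq]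
  linarith

private lemma log_log_step (ρ h : ℝ) (hρ : 0 < ρ) (hρh : ρ < h) (h1 : h < 1) :
    ρ * (1 - ρ / h) ≤ Real.log (-Real.log (ρ + (h - ρ) * h)) - Real.log (-Real.log h) := by
  have hh0 : 0 < h := lt_trans hρ hρh
  have hu0 : 0 < h - ρ := by linarith
  set B := ρ + (h - ρ) * h with hB
  have hm0 : 0 < B := by positivity
  have hmh : B < h := by rw [hB]; nlinarith
  have hm1 : B < 1 := lt_trans hmh h1
  set L1 := -Real.log h with hL1
  set L2 := -Real.log B with hL2
  have hL1p : 0 < L1 := by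
    have := Real.log_neg hh0 h1; simp [hL1]; linarith
  have hL2p : 0 < L2 := by
    have := Real.log_neg hm0 hm1; simp [hL2]; linarith
  have hL12 : L1 < L2 := by
    have := Real.log_lt_log hm0 hmh
    simp [hL1, hL2]; linarith
  set A := Real.log L2 - Real.log L1 with hA
  -- (i)  L2 - L1 ≤ A * L2
  have e1 : L2 - L1 ≤ A * L2 := by
    have h3 : Real.log (L1 / L2) ≤ L1 / L2 - 1 := Real.log_le_sub_one_of_pos (by positivity)
    rw [Real.log_div hL1p.ne' hL2p.ne'] at h3
    rw [div_sub_one hL2p.ne'] at h3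
    rw [le_div_iff₀ hL2p] at h3
    have h3' : (Real.log L1 - Real.log L2) * L2 = -(A * L2) := by rw [hA]; ring
    rw [h3'] at h3
    linarith
  -- (ii) (h-ρ)*(1-h) ≤ (L2 - L1) * h
  have e2 : (h - ρ) * (1 - h) ≤ (L2 - L1) * h := by
    have h4 : Real.log (B / h) ≤ B / h - 1 := Real.log_le_sub_one_of_pos (by positivity)
    rw [Real.log_div hm0.ne' hh0.ne'] at h4
    rw [div_sub_one hh0.ne'] at h4
    rw [le_div_iff₀ hh0] at h4
    have h4' : (Real.log B - Real.log h) * h = (L1 - L2) * h := by rw [hL1, hL2]; ring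
    rw [h4'] at h4
    rw [hB] at h4
    nlinarith [h4]
  -- (iii) L2 * B ≤ 1 - B
  have e3 : L2 * B ≤ 1 - B := by
    have h5 : Real.log (B⁻¹) ≤ B⁻¹ - 1 := Real.log_le_sub_one_of_pos (by positivity)
    rw [Real.log_inv] at h5
    have h5' : L2 ≤ B⁻¹ - 1 := by rw [hL2]; linarith [h5]
    have h7 := mul_le_mul_of_nonneg_right h5' hm0.le
    rw [sub_mul, inv_mul_cancel₀ hm0.ne', one_mul] at h7
    linarith
  -- combine
  have hgoal : ρ * (1 - ρ / h) = ρ * (h - ρ) / h := by field_simp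
  rw [hgoal, div_le_iff₀ hh0]
  -- want: ρ * (h - ρ) ≤ A * h
  have s1 : ρ * (h - ρ) * (L2 * B) ≤ ρ * (h - ρ) * (1 - B) :=
    mul_le_mul_of_nonneg_left e3 (mul_pos hρ hu0).le
  have s2 : ρ * (h - ρ) * (1 - B) ≤ (h - ρ) * (1 - h) * B := by
    rw [hB]
    nlinarith [mul_nonneg (mul_nonneg (mul_nonneg hu0.le hu0.le) hu0.le)
      (by linarith : (0:ℝ) ≤ 1 - h)]
  have s3 : (h - ρ) * (1 - h) * B ≤ (L2 - L1) * h * B :=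
    mul_le_mul_of_nonneg_right e2 hm0.le
  have s4 : (L2 - L1) * h * B ≤ A * h * (L2 * B) := by
    have := mul_le_mul_of_nonneg_right e1 (mul_pos hh0 hm0).le
    nlinarith [this]
  have hpos : 0 < L2 * B := mul_pos hL2p hm0
  have final : ρ * (h - ρ) * (L2 * B) ≤ A * h * (L2 * B) := by linarith
  exact le_of_mul_le_mul_right final hpos

private lemma step_integral (g : ℝ → ℝ) (a q : ℝ) (hga : 0 < g a) (hq : 0 ≤ q)
    (hcont : ContinuousOn (fun t => 1 / g t) (Set.Icc a (a + g a)))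
    (hmono : ∀ t ∈ Set.Icc a (a + g a), g a ≤ g t)
    (hconc : ∀ t ∈ Set.Icc a (a + g a), g t - g a ≤ q * (t - a)) :
    1 - q / 2 ≤ ∫ t in a..(a + g a), 1 / g t := by
  set b := a + g a with hb
  have hab : a ≤ b := by rw [hb]; linarith
  have hint1 : IntervalIntegrable (fun t => 1 / g t) MeasureTheory.volume a b := by
    apply ContinuousOn.intervalIntegrable
    rwa [Set.uIcc_of_le hab]
  have hlin : Continuous fun t : ℝ => 1 / g a - q / (g a) ^ 2 * (t - a) := by
    continuity
  have hint2 : IntervalIntegrable (fun t : ℝ => 1 / g a - q / (g a) ^ 2 * (t - a))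
      MeasureTheory.volume a b := hlin.intervalIntegrable a b
  have hpt : ∀ t ∈ Set.Icc a b, 1 / g a - q / (g a) ^ 2 * (t - a) ≤ 1 / g t := by
    intro t ht
    have h1 : 0 < g t := lt_of_lt_of_le hga (hmono t ht)
    have h2 : 1 / g a - 1 / g t = (g t - g a) / (g a * g t) := by
      rw [div_sub_div _ _ hga.ne' h1.ne', one_mul, mul_one]
    have h3 : (g t - g a) / (g a * g t) ≤ q * (t - a) / (g a * g a) := by
      apply div_le_div₀ (mul_nonneg hq (by linarith [ht.1])) (hconc t ht) (by positivity)
      nlinarith [hmono t ht]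
    have h4 : q * (t - a) / (g a * g a) = q / (g a) ^ 2 * (t - a) := by
      rw [pow_two]; ring
    linarith
  have hmon := intervalIntegral.integral_mono_on hab hint2 hint1 hpt
  have hlinint : IntervalIntegrable (fun t : ℝ => t - a) MeasureTheory.volume a b :=
    (by fun_prop : Continuous fun t : ℝ => t - a).intervalIntegrable a b
  have h5 : (∫ t in a..b, (t - a)) = (b - a) ^ 2 / 2 := by
    rw [intervalIntegral.integral_comp_sub_right (fun x => x) a, sub_self, integral_id]
    ring
  have hcomp : (∫ t in a..b, (1 / g a - q / (g a) ^ 2 * (t - a))) = 1 - q / 2 := by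
    rw [intervalIntegral.integral_sub intervalIntegrable_const
      ((by fun_prop : Continuous fun t : ℝ => q / (g a) ^ 2 * (t - a)).intervalIntegrable a b),
      intervalIntegral.integral_const, intervalIntegral.integral_const_mul, h5]
    have hba : b - a = g a := by rw [hb]; ring
    rw [hba, smul_eq_mul]
    field_simp
  linarith

theorem K_le_F_dK_plus_overhead
    (ρ τ : ℝ) (hρ0 : 0 < ρ) (hρ1 : ρ < 1) (hτ0 : 0 < τ) (hτ1 : τ < 1)
    (d : ℕ → ℝ) (hd0 : d 0 = 0)
    (hd : ∀ k, d (k + 1) = d k - Real.log (ρ + τ * (1 - ρ) * Real.exp (-(d k))))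
    (F : ℝ → ℝ)
    (hF : ∀ x, F x = ∫ t in (0 : ℝ)..x, 1 / (-Real.log (ρ + τ * (1 - ρ) * Real.exp (-t)))) :
    ∀ K : ℕ, (K : ℝ) ≤ F (d K) +
      (1 / (2 * ρ)) * Real.log (Real.log ρ / Real.log (ρ + τ * (1 - ρ))) := by
  set c := τ * (1 - ρ) with hcdef
  have hc0 : 0 < c := mul_pos hτ0 (by linarith)
  have hρc1 : ρ + c < 1 := by rw [hcdef]; nlinarith
  set g : ℝ → ℝ := fun x => -Real.log (ρ + c * Real.exp (-x)) with hgdef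
  have hgrec : ∀ k, d (k + 1) = d k + g (d k) := by
    intro k; rw [hd k]; rw [hgdef]; ring
  have hhx : ∀ x : ℝ, 0 < ρ + c * Real.exp (-x) := fun x => by positivity
  have hhx1 : ∀ x : ℝ, 0 ≤ x → ρ + c * Real.exp (-x) < 1 := by
    intro x hx
    have h1 : Real.exp (-x) ≤ 1 := Real.exp_le_one_iff.mpr (by linarith)
    nlinarith
  have hgpos : ∀ x : ℝ, 0 ≤ x → 0 < g x := by
    intro x hx
    have := Real.log_neg (hhx x) (hhx1 x hx)
    rw [hgdef]; simpa using this
  have hdnn : ∀ k, 0 ≤ d k := by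
    intro k; induction k with
    | zero => simp [hd0]
    | succ n ih =>
      rw [hgrec n]; have := hgpos (d n) ih; linarith
  have hgmono : ∀ a t : ℝ, a ≤ t → g a ≤ g t := by
    intro a t hle
    have h1 : ρ + c * Real.exp (-t) ≤ ρ + c * Real.exp (-a) := by
      have := Real.exp_le_exp.mpr (neg_le_neg hle); nlinarith
    rw [hgdef]
    simp only [neg_le_neg_iff]
    exact Real.log_le_log (hhx t) h1
  -- continuity
  have hfc : ContinuousOn (fun t : ℝ => 1 / g t) (Set.Ici 0) := by
    apply ContinuousOn.div continuousOn_const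
    · intro x _
      apply ContinuousAt.continuousWithinAt
      have h1 : ContinuousAt (fun x : ℝ => ρ + c * Real.exp (-x)) x := by fun_prop
      exact (h1.log (hhx x).ne').neg
    · intro x hx
      exact (hgpos x hx).ne'
  have hInt : ∀ a b : ℝ, 0 ≤ a → 0 ≤ b →
      IntervalIntegrable (fun t : ℝ => 1 / g t) MeasureTheory.volume a b := by
    intro a b ha hb
    apply ContinuousOn.intervalIntegrable
    apply hfc.mono
    intro x hx
    rcases le_total a b with h | h
    · rw [Set.uIcc_of_le h] at hx; exact le_trans ha hx.1
    · rw [Set.uIcc_of_ge h] at hx; exact le_trans hb hx.1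
  -- F step
  have hFstep : ∀ k, F (d (k + 1)) = F (d k) + ∫ t in (d k)..(d (k + 1)), 1 / g t := by
    intro k
    have h1 := hInt 0 (d k) le_rfl (hdnn k)
    have h2 := hInt (d k) (d (k + 1)) (hdnn k) (hdnn (k + 1))
    rw [hF, hF]
    exact (intervalIntegral.integral_add_adjacent_intervals h1 h2).symm
  -- main induction
  have main : ∀ K : ℕ, (K : ℝ) + (1 / (2 * ρ)) * Real.log (g 0)
      ≤ F (d K) + (1 / (2 * ρ)) * Real.log (g (d K)) := by
    intro K
    induction K with
    | zero =>
      have : F (d 0) = 0 := by rw [hd0, hF, intervalIntegral.integral_same]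
      rw [this, hd0]; simp
    | succ n ih =>
      have ha := hdnn n
      have hga := hgpos (d n) ha
      have hb : d (n + 1) = d n + g (d n) := hgrec n
      set h := ρ + c * Real.exp (-(d n)) with hhdef
      have hhρ : ρ < h := by
        rw [hhdef]; nlinarith [Real.exp_pos (-(d n))]
      have hh1 : h < 1 := hhx1 (d n) ha
      have hnext : ρ + c * Real.exp (-(d (n + 1))) = ρ + (h - ρ) * h := by
        rw [hb, neg_add, Real.exp_add]
        have hlog : Real.exp (-(g (d n))) = h := by
          simp only [hgdef, neg_neg]
          exact Real.exp_log (hhx (d n))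
        rw [hlog, hhdef]; ring
      -- integral lower bound
      have hconc : ∀ t ∈ Set.Icc (d n) (d n + g (d n)),
          g t - g (d n) ≤ (1 - ρ / h) * (t - (d n)) := by
        intro t ht
        have := gc_step ρ c (d n) t hρ0 hc0 ht.1
        simp only [hgdef, hhdef]
        linarith
      have hmono' : ∀ t ∈ Set.Icc (d n) (d n + g (d n)), g (d n) ≤ g t :=
        fun t ht => hgmono (d n) t ht.1
      have hq0 : 0 ≤ 1 - ρ / h := by
        rw [sub_nonneg, div_le_one (lt_trans hρ0 hhρ)]; linarith
      have hIlow := step_integral g (d n) (1 - ρ / h) hga hq0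
        (hfc.mono (by
          intro x hx
          exact le_trans ha hx.1))
        hmono' hconc
      -- log-log step
      have hLL := log_log_step ρ h hρ0 hhρ hh1
      have hgb : g (d (n + 1)) = -Real.log (ρ + (h - ρ) * h) := by
        simp only [hgdef]; rw [hnext]
      have hga' : g (d n) = -Real.log h := by simp only [hgdef, hhdef]
      have hLL2 : (1 - ρ / h) / 2
          ≤ (1 / (2 * ρ)) * (Real.log (g (d (n + 1))) - Real.log (g (d n))) := by
        rw [hgb, hga']
        have h2ρ : (0:ℝ) ≤ 1 / (2 * ρ) := by positivity
        have := mul_le_mul_of_nonneg_left hLL h2ρ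
        calc (1 - ρ / h) / 2 = 1 / (2 * ρ) * (ρ * (1 - ρ / h)) := by field_simp
          _ ≤ _ := this
      have hFs := hFstep n
      rw [← hb] at hIlow
      push_cast
      linarith [ih, hIlow, hFs, hLL2]
  -- conclude
  intro K
  have hmK := main K
  have hgK : g (d K) ≤ -Real.log ρ := by
    rw [hgdef]
    simp only [neg_le_neg_iff]
    apply Real.log_le_log hρ0
    nlinarith [Real.exp_pos (-(d K))]
  have hlogρpos : 0 < -Real.log ρ := by
    have := Real.log_neg hρ0 hρ1; linarith
  have hmono2 : Real.log (g (d K)) ≤ Real.log (-Real.log ρ) :=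
    Real.log_le_log (hgpos (d K) (hdnn K)) hgK
  have hg0 : g 0 = -Real.log (ρ + c) := by
    rw [hgdef]; simp
  have hg0pos : 0 < -Real.log (ρ + c) := by
    have := Real.log_neg (by positivity : (0:ℝ) < ρ + c) hρc1; linarith
  have hfin : Real.log (Real.log ρ / Real.log (ρ + c))
      = Real.log (-Real.log ρ) - Real.log (-Real.log (ρ + c)) := by
    rw [← neg_div_neg_eq, Real.log_div hlogρpos.ne' hg0pos.ne']
  have h2ρ : (0:ℝ) ≤ 1 / (2 * ρ) := by positivity
  have hstep : (1 / (2 * ρ)) * (Real.log (g (d K)) - Real.log (g 0))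
      ≤ (1 / (2 * ρ)) * Real.log (Real.log ρ / Real.log (ρ + c)) := by
    rw [hfin, hg0]
    apply mul_le_mul_of_nonneg_left _ h2ρ
    linarith
  linarith [hmK, hstep]
end

section
/- Let 0<ρ<1 and let t ∈ [ρ, 1). Then t·log(t) / log(ρ + (t−ρ)·t) ≥ ρ. -/
theorem t_log_ratio_ge_rho
    (ρ t : ℝ) (hρ0 : 0 < ρ) (hρ1 : ρ < 1) (ht : t ∈ Set.Ico ρ 1) :
    t * Real.log t / Real.log (ρ + (t - ρ) * t) ≥ ρ := by
  obtain ⟨hρt, ht1⟩ := ht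
  have ht0 : 0 < t := lt_of_lt_of_le hρ0 hρt
  set a : ℝ := ρ + (t - ρ) * t with ha_def
  have ha_eq : a = (1 - t) * ρ + t * t := by ring
  have ha0 : 0 < a := by nlinarith
  have ha1 : a < 1 := by nlinarith
  have hloga_neg : Real.log a < 0 := Real.log_neg ha0 ha1
  -- concavity of log: log a ≥ (1-t) log ρ + t log t
  have hconc : (1 - t) * Real.log ρ + t * Real.log t ≤ Real.log a := by
    have := strictConcaveOn_log_Ioi.concaveOn.2 (Set.mem_Ioi.mpr hρ0)
      (Set.mem_Ioi.mpr ht0) (by linarith : (0:ℝ) ≤ 1 - t) (le_of_lt ht0)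
      (by ring)
    simpa [smul_eq_mul, ha_eq] using this
  -- convexity of x log x: (1-ρ) * (t log t) ≤ (1-t) * (ρ log ρ)
  have hkey : (1 - ρ) * (t * Real.log t) ≤ (1 - t) * (ρ * Real.log ρ) := by
    have h1ρ : (0:ℝ) < 1 - ρ := by linarith
    have hw1 : (0:ℝ) ≤ (1 - t) / (1 - ρ) := div_nonneg (by linarith) (le_of_lt h1ρ)
    have hw2 : (0:ℝ) ≤ (t - ρ) / (1 - ρ) := div_nonneg (by linarith) (le_of_lt h1ρ)
    have hw3 : (1 - t) / (1 - ρ) + (t - ρ) / (1 - ρ) = 1 := by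
      field_simp
      ring
    have hcv := Real.convexOn_mul_log.2 (Set.mem_Ici.mpr (le_of_lt hρ0))
      (Set.mem_Ici.mpr (zero_le_one)) hw1 hw2 hw3
    simp only [smul_eq_mul, Real.log_one, mul_zero, mul_one, add_zero] at hcv
    have heq : (1 - t) / (1 - ρ) * ρ + (t - ρ) / (1 - ρ) = t := by
      field_simp; ring
    rw [heq] at hcv
    have := mul_le_mul_of_nonneg_left hcv (le_of_lt h1ρ)
    calc (1 - ρ) * (t * Real.log t)
        ≤ (1 - ρ) * ((1 - t) / (1 - ρ) * (ρ * Real.log ρ)) := this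
      _ = (1 - t) * (ρ * Real.log ρ) := by field_simp
  -- combine: t log t ≤ ρ log a
  have hmain : t * Real.log t ≤ ρ * Real.log a := by
    have h2 : ρ * ((1 - t) * Real.log ρ + t * Real.log t) ≤ ρ * Real.log a :=
      mul_le_mul_of_nonneg_left hconc (le_of_lt hρ0)
    nlinarith
  rw [ge_iff_le, le_div_iff_of_neg hloga_neg]
  linarith [hmain]
end

section
/- Let 0<ρ<1, 0<τ<1, and let {d_k} be defined by d_0=0, d_{k+1} = d_k − log(ρ + τ(1-ρ)e^{−d_k}). Then for every K ∈ ℕ, the sum ∑_{k=0}^{K−1} τ(1-ρ)e^{−d_k} / (ρ + τ(1-ρ)e^{−d_k}) ≤ (1/ρ)·log( log(ρ) / log(ρ + τ(1-ρ)) ). -/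
open Real Finset

/-- `log b ≥ 1 - 1/b` for `b > 0`. -/
lemma aux_log_lower (b : ℝ) (hb : 0 < b) : 1 - 1 / b ≤ Real.log b := by
  have h := Real.log_le_sub_one_of_pos (show (0:ℝ) < 1 / b by positivity)
  rw [one_div, Real.log_inv] at h
  rw [one_div]
  linarith

/-- Key per-step inequality. -/
lemma step_ineq (ρ b : ℝ) (hρ0 : 0 < ρ) (hb : ρ < b) (hb1 : b < 1) :
    ρ * ((b - ρ) / b) ≤
      Real.log (-Real.log (ρ + (b - ρ) * b)) - Real.log (-Real.log b) := by
  have hb0 : 0 < b := hρ0.trans hb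
  set x := b - ρ with hxdef
  have hx0 : 0 < x := by simp [hxdef]; linarith
  set b' := ρ + x * b with hb'def
  have hb'pos : 0 < b' := by positivity
  have hb'lt : b' < b := by nlinarith
  have hb'1 : b' < 1 := hb'lt.trans hb1
  have hL : 0 < -Real.log b := by have := Real.log_neg hb0 hb1; linarith
  have hL' : 0 < -Real.log b' := by have := Real.log_neg hb'pos hb'1; linarith
  -- b' ≤ exp ((1+x) * log b)
  have hlogb : 1 - 1 / b ≤ Real.log b := aux_log_lower b hb0
  have hexp : b' ≤ Real.exp ((1 + x) * Real.log b) := by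
    have h1 : Real.exp ((1 + x) * Real.log b)
        = b * Real.exp (x * Real.log b) := by
      rw [add_mul, one_mul, Real.exp_add, Real.exp_log hb0]
    have h2 : x * Real.log b + 1 ≤ Real.exp (x * Real.log b) :=
      Real.add_one_le_exp _
    have h3 : b * (x * Real.log b + 1) ≤ b * Real.exp (x * Real.log b) := by
      exact mul_le_mul_of_nonneg_left h2 hb0.le
    have h4 : b' ≤ b * (x * Real.log b + 1) := by
      have : x * (b * Real.log b) ≥ x * (b - 1) := by
        have : b - 1 ≤ b * Real.log b := by
          have := mul_le_mul_of_nonneg_left hlogb hb0.le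
          have hne : b ≠ 0 := ne_of_gt hb0
          field_simp at this
          linarith
        exact mul_le_mul_of_nonneg_left this hx0.le
      nlinarith
    linarith [h1 ▸ (h4.trans h3)]
  -- hence  (1+x) * (-log b) ≤ -log b'
  have hLmul : (1 + x) * (-Real.log b) ≤ -Real.log b' := by
    have := (Real.log_le_iff_le_exp hb'pos).2 hexp
    nlinarith
  -- log monotone
  have hlogL : Real.log ((1 + x) * (-Real.log b)) ≤ Real.log (-Real.log b') :=
    Real.log_le_log (by positivity) hLmul
  rw [Real.log_mul (by positivity) (ne_of_gt hL)] at hlogL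
  -- log (1+x) ≥ x/(1+x) ≥ ρ x / b
  have h5 : x / (1 + x) ≤ Real.log (1 + x) := by
    have := aux_log_lower (1 + x) (by positivity)
    have h6 : 1 - 1 / (1 + x) = x / (1 + x) := by field_simp; ring
    linarith [h6 ▸ this]
  have h7 : ρ * (x / b) ≤ x / (1 + x) := by
    rw [mul_div_assoc', div_le_div_iff₀ hb0 (by positivity)]
    nlinarith [mul_nonneg (mul_nonneg hx0.le hx0.le) (show (0:ℝ) ≤ 1 - ρ by linarith)]
  linarith

theorem sum_fraction_bound
    (ρ τ : ℝ) (hρ0 : 0 < ρ) (hρ1 : ρ < 1) (hτ0 : 0 < τ) (hτ1 : τ < 1)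
    (d : ℕ → ℝ) (hd0 : d 0 = 0)
    (hd : ∀ k, d (k + 1) = d k - Real.log (ρ + τ * (1 - ρ) * Real.exp (-(d k)))) :
    ∀ K : ℕ,
      ∑ k ∈ Finset.range K,
        τ * (1 - ρ) * Real.exp (-(d k)) / (ρ + τ * (1 - ρ) * Real.exp (-(d k))) ≤
      (1 / ρ) * Real.log (Real.log ρ / Real.log (ρ + τ * (1 - ρ))) := by
  set b : ℕ → ℝ := fun k => ρ + τ * (1 - ρ) * Real.exp (-(d k)) with hbdef
  have hblb : ∀ k, ρ < b k := by
    intro k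
    have : 0 < τ * (1 - ρ) * Real.exp (-(d k)) :=
      mul_pos (mul_pos hτ0 (by linarith)) (Real.exp_pos _)
    simp only [hbdef]; linarith
  have hbrec : ∀ k, b (k + 1) = ρ + (b k - ρ) * b k := by
    intro k
    have hbk0 : 0 < b k := hρ0.trans (hblb k)
    have hbk : b k = ρ + τ * (1 - ρ) * Real.exp (-(d k)) := rfl
    have hd' : d (k + 1) = d k - Real.log (b k) := by rw [hd k, ← hbk]
    have hneg : -(d (k + 1)) = -(d k) + Real.log (b k) := by rw [hd']; ring
    have hE : Real.exp (-(d (k + 1))) = Real.exp (-(d k)) * b k := by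
      rw [hneg, Real.exp_add, Real.exp_log hbk0]
    have hbk1 : b (k + 1) = ρ + τ * (1 - ρ) * Real.exp (-(d (k + 1))) := rfl
    rw [hbk1, hE, hbk]; ring
  have hbub : ∀ k, b k < 1 := by
    intro k
    induction k with
    | zero =>
      simp only [hbdef, hd0, neg_zero, Real.exp_zero, mul_one]
      nlinarith
    | succ n ih =>
      have h1 := hblb n
      rw [hbrec n]
      nlinarith
  have hL : ∀ k, 0 < -Real.log (b k) := by
    intro k
    have := Real.log_neg (hρ0.trans (hblb k)) (hbub k)
    linarith
  -- telescoping inequality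
  have key : ∀ K : ℕ,
      ρ * ∑ k ∈ Finset.range K, (b k - ρ) / b k ≤
        Real.log (-Real.log (b K)) - Real.log (-Real.log (b 0)) := by
    intro K
    induction K with
    | zero => simp
    | succ n ih =>
      rw [Finset.sum_range_succ, mul_add]
      have hstep := step_ineq ρ (b n) hρ0 (hblb n) (hbub n)
      rw [← hbrec n] at hstep
      linarith
  intro K
  have hterm : ∀ k, τ * (1 - ρ) * Real.exp (-(d k)) / (ρ + τ * (1 - ρ) * Real.exp (-(d k)))
      = (b k - ρ) / b k := by
    intro k; simp only [hbdef]; ring_nf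
  have hb0eq : b 0 = ρ + τ * (1 - ρ) := by
    simp [hbdef, hd0]
  -- log L K ≤ log L∞
  have hLinf : 0 < -Real.log ρ := by have := Real.log_neg hρ0 hρ1; linarith
  have hmono : Real.log (-Real.log (b K)) ≤ Real.log (-Real.log ρ) := by
    apply Real.log_le_log (hL K)
    have := Real.log_le_log hρ0 (hblb K).le
    linarith
  have hchain : ρ * ∑ k ∈ Finset.range K, (b k - ρ) / b k ≤
      Real.log (-Real.log ρ) - Real.log (-Real.log (b 0)) := by
    have := key K; linarith
  have hdiv : Real.log (-Real.log ρ) - Real.log (-Real.log (b 0))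
      = Real.log (Real.log ρ / Real.log (ρ + τ * (1 - ρ))) := by
    rw [← Real.log_div (ne_of_gt hLinf) (ne_of_gt (hL 0)), hb0eq.symm,
      neg_div_neg_eq]
  calc ∑ k ∈ Finset.range K,
        τ * (1 - ρ) * Real.exp (-(d k)) / (ρ + τ * (1 - ρ) * Real.exp (-(d k)))
      = ∑ k ∈ Finset.range K, (b k - ρ) / b k := by
        exact Finset.sum_congr rfl fun k _ => hterm k
    _ = (1 / ρ) * (ρ * ∑ k ∈ Finset.range K, (b k - ρ) / b k) := by
        field_simp
    _ ≤ (1 / ρ) * (Real.log (-Real.log ρ) - Real.log (-Real.log (b 0))) :=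
        mul_le_mul_of_nonneg_left hchain (by positivity)
    _ = (1 / ρ) * Real.log (Real.log ρ / Real.log (ρ + τ * (1 - ρ))) := by
        rw [hdiv]
end

section
/- Let 0<ρ<1, 0<τ<1, and 0<ε<1. Define F(x) = ∫_0^x 1/(−log(ρ + τ(1-ρ)e^{−t})) dt and E_1(x) = ∫_x^∞ e^{−t}/t dt. Then F(log(1/ε)) ≤ log(1/ε)/log(1/ρ) + [E_1(log(1/(ρ+τ(1-ρ)))) − E_1(log(1/(ρ+ετ(1-ρ))))] / (ρ·log(1/ρ)). -/
open MeasureTheory Set Real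

lemma expdiv_integrableOn {x : ℝ} (hx : 0 < x) :
    IntegrableOn (fun t => Real.exp (-t) / t) (Set.Ioi x) := by
  have h1 : IntegrableOn (fun t => Real.exp (-t) * x⁻¹) (Set.Ioi x) := by
    have := exp_neg_integrableOn_Ioi x (b := 1) one_pos
    have h := this.mul_const x⁻¹; simp at h; exact h
  refine h1.mono' ?_ ?_
  · refine ContinuousOn.aestronglyMeasurable ?_ measurableSet_Ioi
    exact (Real.continuous_exp.comp continuous_neg).continuousOn.div
      continuousOn_id (fun t ht => ne_of_gt (hx.trans ht))
  · filter_upwards [ae_restrict_mem measurableSet_Ioi] with t ht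
    have ht0 : 0 < t := hx.trans ht
    rw [Real.norm_eq_abs, abs_of_nonneg (by positivity), div_eq_mul_inv]
    gcongr
    exact le_of_lt ht

lemma E1_split {a b : ℝ} (ha : 0 < a) (hab : a ≤ b) :
    (∫ t in Set.Ioi a, Real.exp (-t) / t) =
      (∫ t in a..b, Real.exp (-t) / t) + ∫ t in Set.Ioi b, Real.exp (-t) / t := by
  rw [intervalIntegral.integral_of_le hab,
    ← MeasureTheory.setIntegral_union (Set.Ioc_disjoint_Ioi le_rfl) measurableSet_Ioi
      ((expdiv_integrableOn ha).mono_set Set.Ioc_subset_Ioi_self)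
      (expdiv_integrableOn (ha.trans_le hab)), Set.Ioc_union_Ioi_eq_Ioi hab]

theorem F_log_inv_eps_upper_bound
    (ρ τ ε : ℝ) (hρ0 : 0 < ρ) (hρ1 : ρ < 1) (hτ0 : 0 < τ) (hτ1 : τ < 1)
    (hε0 : 0 < ε) (hε1 : ε < 1)
    (F E₁ : ℝ → ℝ)
    (hF : ∀ x, F x = ∫ t in (0 : ℝ)..x, 1 / (-Real.log (ρ + τ * (1 - ρ) * Real.exp (-t))))
    (hE₁ : ∀ x, E₁ x = ∫ t in Set.Ioi x, Real.exp (-t) / t) :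
    F (Real.log (1 / ε)) ≤ Real.log (1 / ε) / Real.log (1 / ρ) +
      (E₁ (Real.log (1 / (ρ + τ * (1 - ρ)))) - E₁ (Real.log (1 / (ρ + ε * τ * (1 - ρ))))) /
        (ρ * Real.log (1 / ρ)) := by
  have h1ρ : (0:ℝ) < 1 - ρ := by linarith
  set c : ℝ := τ * (1 - ρ) with hc
  have hc0 : 0 < c := mul_pos hτ0 h1ρ
  have hc1 : c < 1 - ρ := by nlinarith
  set L : ℝ := Real.log (1 / ρ) with hL
  have hLdef : L = -Real.log ρ := by rw [hL, one_div, Real.log_inv]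
  have hLpos : 0 < L := by
    rw [hLdef, neg_pos]; exact Real.log_neg hρ0 hρ1
  set X : ℝ := Real.log (1 / ε) with hX
  have hexpX : Real.exp (-X) = ε := by
    rw [hX, one_div, Real.log_inv, neg_neg, Real.exp_log hε0]
  have hXpos : 0 < X := by
    rw [hX, one_div, Real.log_inv, neg_pos]; exact Real.log_neg hε0 hε1
  set p : ℝ → ℝ := fun t => ρ + c * Real.exp (-t) with hp
  set u : ℝ → ℝ := fun t => -Real.log (p t) with hu
  have hp_pos : ∀ t, 0 < p t := by
    intro t; simp only [hp]; positivity
  have hp_gt : ∀ t, ρ < p t := by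
    intro t; simp only [hp]; nlinarith [Real.exp_pos (-t), hc0]
  have hp_lt1 : ∀ t, 0 ≤ t → p t < 1 := by
    intro t ht
    have he : Real.exp (-t) ≤ 1 := Real.exp_le_one_iff.mpr (by linarith)
    simp only [hp]; nlinarith [Real.exp_pos (-t)]
  have hu_pos : ∀ t, 0 ≤ t → 0 < u t := by
    intro t ht
    simp only [hu, neg_pos]
    exact Real.log_neg (hp_pos t) (hp_lt1 t ht)
  have hu_lt : ∀ t, u t < L := by
    intro t
    have := Real.log_lt_log hρ0 (hp_gt t)
    simp only [hu, hLdef]; linarith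
  -- derivative of u
  have hderiv : ∀ t : ℝ, HasDerivAt u (c * Real.exp (-t) / p t) t := by
    intro t
    have h1 : HasDerivAt (fun s : ℝ => Real.exp (-s)) (-Real.exp (-t)) t := by
      have h := (Real.hasDerivAt_exp (-t)).comp t (hasDerivAt_neg t); simp at h; exact h
    have h2 : HasDerivAt p (-(c * Real.exp (-t))) t := by
      simp only [hp]
      simpa [mul_comm, mul_neg] using (h1.const_mul c).const_add ρ
    have h3 := (h2.log (hp_pos t).ne').neg
    simp only [hu]
    simp [neg_div] at h3; exact h3
  have hu_cont : Continuous u := by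
    rw [continuous_iff_continuousAt]; exact fun t => (hderiv t).continuousAt
  have hce_cont : Continuous fun t : ℝ => c * Real.exp (-t) :=
    continuous_const.mul (Real.continuous_exp.comp continuous_neg)
  have hu'_cont : Continuous fun t => c * Real.exp (-t) / p t := by
    refine Continuous.div hce_cont ?_ (fun t => (hp_pos t).ne')
    simp only [hp]; exact continuous_const.add hce_cont
  -- values at endpoints
  have hu0 : u 0 = Real.log (1 / (ρ + c)) := by
    simp only [hu, hp, neg_zero, Real.exp_zero, mul_one, one_div, Real.log_inv]
  have huX : u X = Real.log (1 / (ρ + ε * τ * (1 - ρ))) := by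
    simp only [hu, hp, hexpX, one_div, Real.log_inv, neg_inj]
    congr 1
    rw [hc]; ring
  have hu0X : u 0 ≤ u X := by
    simp only [hu, hp, neg_zero, Real.exp_zero, mul_one, hexpX, neg_le_neg_iff]
    apply Real.log_le_log (by positivity)
    nlinarith [hc0]
  -- F X as integral of 1/u
  have hFX : F X = ∫ t in (0:ℝ)..X, 1 / u t := by
    rw [hF, hu, hp]
  -- pointwise bound
  have hpoint : ∀ t ∈ Set.Icc (0:ℝ) X,
      1 / u t ≤ 1 / L + c * Real.exp (-t) / u t / (ρ * L) := by
    intro t ht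
    have hut : 0 < u t := hu_pos t ht.1
    have key : ρ * L ≤ ρ * u t + c * Real.exp (-t) := by
      have hlog : Real.log (p t / ρ) ≤ p t / ρ - 1 :=
        Real.log_le_sub_one_of_pos (div_pos (hp_pos t) hρ0)
      have hld : Real.log (p t / ρ) = Real.log (p t) - Real.log ρ :=
        Real.log_div (hp_pos t).ne' hρ0.ne'
      rw [hld] at hlog
      have h5 : Real.log (p t) - Real.log ρ ≤ c * Real.exp (-t) / ρ := by
        calc Real.log (p t) - Real.log ρ ≤ p t / ρ - 1 := hlog
        _ = c * Real.exp (-t) / ρ := by simp only [hp]; field_simp; ring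
      have h6 : u t = -Real.log (p t) := by simp only [hu]
      rw [h6, hLdef]
      have h5' : (Real.log (p t) - Real.log ρ) * ρ ≤ c * Real.exp (-t) :=
        (le_div_iff₀ hρ0).mp h5
      nlinarith [h5']
    have h4 : 1 / L + c * Real.exp (-t) / u t / (ρ * L)
        = (ρ * u t + c * Real.exp (-t)) / (ρ * L * u t) := by
      field_simp
    rw [h4, div_le_div_iff₀ hut (by positivity)]
    nlinarith [key, hut]
  -- integrability
  have hcont1 : ContinuousOn (fun t => 1 / u t) (Set.uIcc (0:ℝ) X) := by
    rw [Set.uIcc_of_le hXpos.le]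
    exact continuousOn_const.div hu_cont.continuousOn
      (fun t ht => (hu_pos t ht.1).ne')
  have hcont2 : ContinuousOn (fun t => c * Real.exp (-t) / u t) (Set.uIcc (0:ℝ) X) := by
    rw [Set.uIcc_of_le hXpos.le]
    exact hce_cont.continuousOn.div hu_cont.continuousOn
      (fun t ht => (hu_pos t ht.1).ne')
  have hcont3 : ContinuousOn (fun t => 1 / L + c * Real.exp (-t) / u t / (ρ * L))
      (Set.uIcc (0:ℝ) X) :=
    continuousOn_const.add (hcont2.div_const _)
  have hI1 : IntervalIntegrable (fun t => 1 / u t) volume 0 X :=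
    hcont1.intervalIntegrable
  have hI2 : IntervalIntegrable (fun t => c * Real.exp (-t) / u t) volume 0 X :=
    hcont2.intervalIntegrable
  have hI3 : IntervalIntegrable (fun t => 1 / L + c * Real.exp (-t) / u t / (ρ * L))
      volume 0 X := hcont3.intervalIntegrable
  -- step 1 : mono
  have step1 : (∫ t in (0:ℝ)..X, 1 / u t)
      ≤ ∫ t in (0:ℝ)..X, (1 / L + c * Real.exp (-t) / u t / (ρ * L)) :=
    intervalIntegral.integral_mono_on hXpos.le hI1 hI3 hpoint
  -- step 2 : split RHS integral
  have step2 : (∫ t in (0:ℝ)..X, (1 / L + c * Real.exp (-t) / u t / (ρ * L)))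
      = X / L + (∫ t in (0:ℝ)..X, c * Real.exp (-t) / u t) / (ρ * L) := by
    rw [intervalIntegral.integral_add intervalIntegrable_const (hI2.div_const _),
      intervalIntegral.integral_div (ρ * L) (fun t => c * Real.exp (-t) / u t),
      intervalIntegral.integral_const, smul_eq_mul, sub_zero]
    ring
  -- change of variables
  have hcov : (∫ t in (0:ℝ)..X, (c * Real.exp (-t) / p t) • ((fun z => Real.exp (-z) / z) ∘ u) t)
      = ∫ z in (u 0)..(u X), Real.exp (-z) / z := by
    apply intervalIntegral.integral_comp_smul_deriv' (fun t _ => hderiv t)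
      hu'_cont.continuousOn
    rintro z ⟨t, ht, rfl⟩
    rw [Set.uIcc_of_le hXpos.le] at ht
    have hz : 0 < u t := hu_pos t ht.1
    apply ContinuousAt.continuousWithinAt
    exact ((Real.continuous_exp.comp continuous_neg).continuousAt).div
      continuousAt_id hz.ne'
  have hcov2 : (∫ t in (0:ℝ)..X, c * Real.exp (-t) / u t)
      = ∫ z in (u 0)..(u X), Real.exp (-z) / z := by
    rw [← hcov]
    apply intervalIntegral.integral_congr
    intro t ht
    rw [Set.uIcc_of_le hXpos.le] at ht
    have hut := (hu_pos t ht.1).ne'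
    have hpe : Real.exp (-u t) = p t := by
      simp only [hu, neg_neg, Real.exp_log (hp_pos t)]
    have hpt := (hp_pos t).ne'
    simp only [Function.comp_apply, smul_eq_mul, hpe]
    field_simp
  -- E1 identity
  have hE : E₁ (u 0) - E₁ (u X) = ∫ z in (u 0)..(u X), Real.exp (-z) / z := by
    rw [hE₁ (u 0), hE₁ (u X), E1_split (hu_pos 0 le_rfl) hu0X]; ring
  -- assemble
  rw [hFX, ← hu0, ← huX, hE]
  calc (∫ t in (0:ℝ)..X, 1 / u t)
      ≤ X / L + (∫ t in (0:ℝ)..X, c * Real.exp (-t) / u t) / (ρ * L) := by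
        rw [← step2]; exact step1
    _ = X / L + (∫ z in (u 0)..(u X), Real.exp (-z) / z) / (ρ * L) := by rw [hcov2]
end

section
/- Let 0<ρ<1, q>0, 0<a_0<(1-ρ)/q, τ = a_0 q/(1-ρ), and let a_{k+1} = ρa_k + qa_k². For 0<ε<1, if k ≥ log(1/ε)/log(1/ρ) + c(ρ,τ), where c(ρ,τ) = [E_1(log(1/(ρ+τ(1-ρ)))) − E_1(log(1/ρ))]/(ρ log(1/ρ)) + (1/(2ρ))·log( log(1/ρ)/log(1/(ρ+τ(1-ρ))) ) + 1, then a_k ≤ ε a_0. -/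
open MeasureTheory intervalIntegral


lemma log_ge_aux {t : ℝ} (ht : 1 ≤ t) : 2*(t-1)/(t+1) ≤ Real.log t := by
  have key : MonotoneOn (fun x : ℝ => Real.log x - (2 - 4/(x+1))) (Set.Ici 1) := by
    apply monotoneOn_of_deriv_nonneg (convex_Ici 1)
    · apply ContinuousOn.sub
      · exact Real.continuousOn_log.mono (by intro x hx; simp at hx ⊢; linarith)
      · apply ContinuousOn.sub continuousOn_const
        apply ContinuousOn.div continuousOn_const (by fun_prop)
        intro x hx; simp at hx; positivity
    · intro x hx
      rw [interior_Ici] at hx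
      simp only [Set.mem_Ioi] at hx
      apply DifferentiableAt.differentiableWithinAt
      apply DifferentiableAt.sub
      · exact Real.differentiableAt_log (by positivity)
      · apply DifferentiableAt.sub (differentiableAt_const _)
        apply DifferentiableAt.div (differentiableAt_const _) (by fun_prop)
        positivity
    · intro x hx
      rw [interior_Ici] at hx
      simp only [Set.mem_Ioi] at hx
      have hx0 : (0:ℝ) < x := by linarith
      have hx1 : x + 1 ≠ 0 := by positivity
      have hd : HasDerivAt (fun x : ℝ => Real.log x - (2 - 4/(x+1)))
          (1/x - (0 - (0*(x+1) - 4*1)/(x+1)^2)) x := by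
        apply HasDerivAt.sub
        · simpa using Real.hasDerivAt_log hx0.ne'
        · exact (hasDerivAt_const x 2).sub
            (((hasDerivAt_const x 4).div ((hasDerivAt_id x).add_const 1) hx1))
      rw [hd.deriv]
      have e : 1/x - (0 - (0*(x+1) - 4*1)/(x+1)^2) = (x-1)^2/(x*(x+1)^2) := by
        field_simp; ring
      rw [e]; positivity
  have h := key (Set.mem_Ici.2 le_rfl) (Set.mem_Ici.2 ht) ht
  simp only [Real.log_one] at h
  have e1 : 2*(t-1)/(t+1) = 2 - 4/(t+1) - (2 - 4/(1+1)) := by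
    have : t + 1 ≠ 0 := by positivity
    field_simp; ring
  rw [e1]; linarith

lemma log_le_aux {t : ℝ} (ht : 1 ≤ t) : Real.log t ≤ (t - 1/t)/2 := by
  have key : MonotoneOn (fun x : ℝ => (x - 1/x)/2 - Real.log x) (Set.Ici 1) := by
    apply monotoneOn_of_deriv_nonneg (convex_Ici 1)
    · apply ContinuousOn.sub
      · apply ContinuousOn.div_const
        apply ContinuousOn.sub continuousOn_id
        apply ContinuousOn.div continuousOn_const continuousOn_id
        intro x hx; simp at hx; positivity
      · exact Real.continuousOn_log.mono (by intro x hx; simp at hx ⊢; linarith)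
    · intro x hx
      rw [interior_Ici] at hx
      simp only [Set.mem_Ioi] at hx
      have hx0 : (0:ℝ) < x := by linarith
      apply DifferentiableAt.differentiableWithinAt
      apply DifferentiableAt.sub
      · apply DifferentiableAt.div_const
        exact (differentiableAt_id).sub ((differentiableAt_const _).div differentiableAt_id hx0.ne')
      · exact Real.differentiableAt_log hx0.ne'
    · intro x hx
      rw [interior_Ici] at hx
      simp only [Set.mem_Ioi] at hx
      have hx0 : (0:ℝ) < x := by linarith
      have hd : HasDerivAt (fun x : ℝ => (x - 1/x)/2 - Real.log x)
          ((1 - (0*x - 1*1)/x^2)/2 - 1/x) x := by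
        apply HasDerivAt.sub
        · exact (((hasDerivAt_id x).sub (((hasDerivAt_const x 1)).div (hasDerivAt_id x) hx0.ne')).div_const 2)
        · simpa using Real.hasDerivAt_log hx0.ne'
      rw [hd.deriv]
      have e : (1 - (0*x - 1*1)/x^2)/2 - 1/x = (x-1)^2/(2*x^2) := by
        field_simp; ring
      rw [e]; positivity
  have h := key (Set.mem_Ici.2 le_rfl) (Set.mem_Ici.2 ht) ht
  simp only [Real.log_one] at h
  have : (1 - 1/1)/2 - 0 = (0:ℝ) := by norm_num
  linarith [key (Set.mem_Ici.2 le_rfl) (Set.mem_Ici.2 ht) ht]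

set_option maxHeartbeats 1600000 in
lemma keyPoly (v s sp : ℝ) (h0 : 0 < v) (h1 : v < s) (h2 : s < 1)
    (hsp : sp = v + s*(s-v)) :
    (sp^2 - v^2)*(s+sp)*((1-s^2)*sp + (1-sp^2)*s)*(1+v)
      ≤ 16*(sp*(1+v)+1-v)*(s-sp)*s*sp^2 := by
  have hmpos : (0:ℝ) < s - v := by linarith
  have hwpos : (0:ℝ) < 1 - s := by linarith
  rw [← sub_nonneg]
  have hid : 16*(sp*(1+v)+1-v)*(s-sp)*s*sp^2
      - (sp^2 - v^2)*(s+sp)*((1-s^2)*sp + (1-sp^2)*s)*(1+v)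
      = (fun m w v => m*w*(32*w*v^9 + 168*w^2*v^8 + 368*w^3*v^7 + 432*w^4*v^6 + 288*w^5*v^5 + 104*w^6*v^4 + 16*w^7*v^3 + 16*m*v^9 + 352*m*w*v^8 + 1372*m*w^2*v^7 + 2356*m*w^3*v^6 + 2132*m*w^4*v^5 + 1036*m*w^5*v^4 + 240*m*w^6*v^3 + 16*m*w^7*v^2 + 152*m^2*v^8 + 1680*m^2*w*v^7 + 4912*m^2*w^2*v^6 + 6468*m^2*w^3*v^5 + 4326*m^2*w^4*v^4 + 1408*m^2*w^5*v^3 + 166*m^2*w^6*v^2 + 636*m^3*v^7 + 4568*m^3*w*v^6 + 10012*m^3*w^2*v^5 + 9800*m^3*w^3*v^4 + 4551*m^3*w^4*v^3 + 861*m^3*w^5*v^2 + 30*m^3*w^6*v + 1540*m^4*v^6 + 7812*m^4*w*v^5 + 12654*m^4*w^2*v^4 + 8784*m^4*w^3*v^3 + 2564*m^4*w^4*v^2 + 216*m^4*w^5*v + 2380*m^5*v^5 + 8732*m^5*w*v^4 + 10123*m^5*w^2*v^3 + 4618*m^5*w^3*v^2 + 711*m^5*w^4*v + 15*m^5*w^5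 + 2436*m^6*v^4 + 6392*m^6*w*v^3 + 4993*m^6*w^2*v^2 + 1304*m^6*w^3*v + 72*m^6*w^4 + 1652*m^7*v^3 + 2960*m^7*w*v^2 + 1385*m^7*w^2*v + 150*m^7*w^3 + 716*m^8*v^2 + 788*m^8*w*v + 165*m^8*w^2 + 180*m^9*v + 92*m^9*w + 20*m^10)) (s-v) (1-s) v := by
    subst hsp; simp only; ring
  rw [hid]; simp only
  have e1 : s - v = Real.sqrt (s-v)^2 := (Real.sq_sqrt hmpos.le).symm
  have e2 : 1 - s = Real.sqrt (1-s)^2 := (Real.sq_sqrt hwpos.le).symm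
  have e3 : v = Real.sqrt v ^2 := (Real.sq_sqrt h0.le).symm
  rw [e1, e2, e3]
  positivity

set_option maxHeartbeats 1000000 in
lemma stepIneq (ρ σ sp : ℝ) (h0 : 0 < ρ) (h1 : ρ < σ) (h2 : σ < 1)
    (hsp : sp = ρ + σ*(σ-ρ)) :
    ρ * Real.log (sp/ρ) ≤
      (sp + Real.log (1/ρ)/2) *
        (Real.log (Real.log (1/sp)) - Real.log (Real.log (1/σ))) := by
  have hσ0 : 0 < σ := lt_trans h0 h1
  have hspρ : ρ < sp := by nlinarith
  have hspσ : sp < σ := by nlinarith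
  have hsp0 : 0 < sp := lt_trans h0 hspρ
  have hsp1 : sp < 1 := lt_trans hspσ h2
  set L : ℝ := Real.log (1/σ) with hLdef
  set L' : ℝ := Real.log (1/sp) with hL'def
  have hiσ : (0:ℝ) < 1/σ := by positivity
  have hisp : (0:ℝ) < 1/sp := by positivity
  -- bounds on L
  have hLlow : 2*(1-σ)/(1+σ) ≤ L := by
    have h := log_ge_aux (t := 1/σ) (one_le_one_div hσ0 h2.le)
    have e : 2*(1/σ-1)/(1/σ+1) = 2*(1-σ)/(1+σ) := by
      rw [div_eq_div_iff (by linarith) (by linarith)]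
      field_simp <;> ring
    rwa [e] at h
  have hLup : L ≤ (1-σ^2)/(2*σ) := by
    have h := log_le_aux (t := 1/σ) (one_le_one_div hσ0 h2.le)
    have e : (1/σ - 1/(1/σ))/2 = (1-σ^2)/(2*σ) := by
      rw [one_div_one_div]; rw [div_eq_div_iff (by norm_num) (by linarith)]
      field_simp <;> ring
    rwa [e] at h
  have hL'low : 2*(1-sp)/(1+sp) ≤ L' := by
    have h := log_ge_aux (t := 1/sp) (one_le_one_div hsp0 hsp1.le)
    have e : 2*(1/sp-1)/(1/sp+1) = 2*(1-sp)/(1+sp) := by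
      rw [div_eq_div_iff (by linarith) (by linarith)]
      field_simp <;> ring
    rwa [e] at h
  have hL'up : L' ≤ (1-sp^2)/(2*sp) := by
    have h := log_le_aux (t := 1/sp) (one_le_one_div hsp0 hsp1.le)
    have e : (1/sp - 1/(1/sp))/2 = (1-sp^2)/(2*sp) := by
      rw [one_div_one_div]; rw [div_eq_div_iff (by norm_num) (by linarith)]
      field_simp <;> ring
    rwa [e] at h
  have hLpos : 0 < L := lt_of_lt_of_le (by apply div_pos <;> linarith) hLlow
  have hL'pos : 0 < L' := lt_of_lt_of_le (by apply div_pos <;> linarith) hL'low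
  -- L' - L = log (σ/sp) ≥ 2(σ-sp)/(σ+sp)
  have hLL : L' - L = Real.log (σ/sp) := by
    rw [hLdef, hL'def, Real.log_div one_ne_zero hsp0.ne',
      Real.log_div one_ne_zero hσ0.ne', Real.log_div hσ0.ne' hsp0.ne']
    ring
  have hdiff : 2*(σ-sp)/(σ+sp) ≤ L' - L := by
    rw [hLL]
    have h := log_ge_aux (t := σ/sp) ((one_le_div hsp0).2 hspσ.le)
    have e : 2*(σ/sp-1)/(σ/sp+1) = 2*(σ-sp)/(σ+sp) := by
      rw [div_eq_div_iff (by positivity) (by linarith)]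
      field_simp <;> ring
    rwa [e] at h
  have hdiffpos : (0:ℝ) ≤ 2*(σ-sp)/(σ+sp) := by
    apply div_nonneg <;> linarith
  -- log L' - log L ≥ 2(L'-L)/(L'+L)
  have hlogratio : 2*(L'-L)/(L'+L) ≤ Real.log L' - Real.log L := by
    have hle : 1 ≤ L'/L := (one_le_div hLpos).2 (by linarith)
    have h := log_ge_aux hle
    have e : 2*(L'/L-1)/(L'/L+1) = 2*(L'-L)/(L'+L) := by
      rw [div_eq_div_iff (by positivity) (by linarith)]
      field_simp <;> ring
    rw [e, Real.log_div hL'pos.ne' hLpos.ne'] at h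
    exact h
  -- x₁ bound
  have hx1 : 2*(1-ρ)/(1+ρ) ≤ Real.log (1/ρ) := by
    have h := log_ge_aux (t := 1/ρ) (one_le_one_div h0 (by linarith))
    have e : 2*(1/ρ-1)/(1/ρ+1) = 2*(1-ρ)/(1+ρ) := by
      rw [div_eq_div_iff (by positivity) (by linarith)]
      field_simp <;> ring
    rwa [e] at h
  -- LHS bound
  have hA : ρ * Real.log (sp/ρ) ≤ (sp^2-ρ^2)/(2*sp) := by
    have h := log_le_aux (t := sp/ρ) ((one_le_div h0).2 hspρ.le)
    have e : ρ*((sp/ρ - 1/(sp/ρ))/2) = (sp^2-ρ^2)/(2*sp) := by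
      rw [one_div_div]
      field_simp
    calc ρ * Real.log (sp/ρ) ≤ ρ*((sp/ρ - 1/(sp/ρ))/2) :=
          mul_le_mul_of_nonneg_left h h0.le
      _ = (sp^2-ρ^2)/(2*sp) := e
  -- middle comparison
  set G : ℝ := (1-σ^2)*sp + (1-sp^2)*σ with hGdef
  have hGpos : 0 < G := by
    have e1 : 0 < 1 - σ^2 := by nlinarith
    have e2 : 0 < 1 - sp^2 := by nlinarith
    have h1' : 0 < (1-σ^2)*sp := mul_pos e1 hsp0
    have h2' : 0 < (1-sp^2)*σ := mul_pos e2 hσ0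
    rw [hGdef]; linarith
  have hsum : L' + L ≤ G/(2*σ*sp) := by
    have e : (1-sp^2)/(2*sp) + (1-σ^2)/(2*σ) = G/(2*σ*sp) := by
      rw [hGdef]; field_simp; ring
    linarith [hL'up, hLup]
  have hQpos : 0 < G/(2*σ*sp) := div_pos hGpos (by positivity)
  have hmid : 2*(2*(σ-sp)/(σ+sp))/(G/(2*σ*sp)) ≤ 2*(L'-L)/(L'+L) := by
    apply div_le_div₀ (by linarith) (by linarith) (by linarith) hsum
  -- the key polynomial inequality, in divided form
  have hkey : (sp^2-ρ^2)/(2*sp) ≤ (sp + (1-ρ)/(1+ρ)) * (2*(2*(σ-sp)/(σ+sp))/(G/(2*σ*sp))) := by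
    have hss : (σ+sp) ≠ 0 := ne_of_gt (by linarith)
    have h1ρ' : (1+ρ) ≠ 0 := ne_of_gt (by linarith)
    have hmidval : (sp + (1-ρ)/(1+ρ)) * (2*(2*(σ-sp)/(σ+sp))/(G/(2*σ*sp)))
        = ((sp + (1-ρ)/(1+ρ))*(8*σ*sp*(σ-sp)))/((σ+sp)*G) := by
      field_simp
      ring
    rw [hmidval, div_le_div_iff₀ (by positivity) (by positivity)]
    have h1ρ : (0:ℝ) < 1+ρ := by linarith
    rw [← mul_le_mul_iff_of_pos_right h1ρ]
    have hkp := keyPoly ρ σ sp h0 h1 h2 hsp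
    calc (sp^2-ρ^2)*((σ+sp)*G)*(1+ρ)
        = (sp^2 - ρ^2)*(σ+sp)*((1-σ^2)*sp + (1-sp^2)*σ)*(1+ρ) := by rw [hGdef]; ring
      _ ≤ 16*(sp*(1+ρ)+1-ρ)*(σ-sp)*σ*sp^2 := hkp
      _ = (sp + (1-ρ)/(1+ρ))*(8*σ*sp*(σ-sp))*(2*sp)*(1+ρ) := by
          field_simp
          ring
  -- assemble
  have hWr : 0 ≤ (1-ρ)/(1+ρ) := by apply div_nonneg <;> linarith
  have hW : 0 ≤ sp + (1-ρ)/(1+ρ) := by linarith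
  have hWle : sp + (1-ρ)/(1+ρ) ≤ sp + Real.log (1/ρ)/2 := by
    have e : 2*((1-ρ)/(1+ρ)) = 2*(1-ρ)/(1+ρ) := by ring
    linarith
  have hmidnonneg : 0 ≤ 2*(2*(σ-sp)/(σ+sp))/(G/(2*σ*sp)) := by
    apply div_nonneg (by linarith) hQpos.le
  have hstep2 : (sp + (1-ρ)/(1+ρ)) * (2*(2*(σ-sp)/(σ+sp))/(G/(2*σ*sp)))
      ≤ (sp + Real.log (1/ρ)/2) * (Real.log L' - Real.log L) := by
    apply mul_le_mul hWle (le_trans hmid hlogratio) hmidnonneg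
    have : (0:ℝ) < 2*(1-ρ)/(1+ρ) := by apply div_pos <;> linarith
    linarith
  linarith [hA, hkey, hstep2]

theorem main_iteration_complexity_bound
    (ρ q ε : ℝ) (hρ0 : 0 < ρ) (hρ1 : ρ < 1) (hq : 0 < q)
    (hε0 : 0 < ε) (hε1 : ε < 1)
    (a : ℕ → ℝ) (ha : ∀ k, a (k + 1) = ρ * a k + q * (a k) ^ 2)
    (ha0 : 0 < a 0) (ha0' : a 0 < (1 - ρ) / q)
    (τ : ℝ) (hτ : τ = a 0 * q / (1 - ρ))
    (E₁ : ℝ → ℝ) (hE₁ : ∀ x, E₁ x = ∫ t in Set.Ioi x, Real.exp (-t) / t)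
    (c : ℝ)
    (hc : c = (E₁ (Real.log (1 / (ρ + τ * (1 - ρ)))) - E₁ (Real.log (1 / ρ))) /
        (ρ * Real.log (1 / ρ)) +
      (1 / (2 * ρ)) * Real.log (Real.log (1 / ρ) / Real.log (1 / (ρ + τ * (1 - ρ)))) + 1)
    (k : ℕ) (hk : (k : ℝ) ≥ Real.log (1 / ε) / Real.log (1 / ρ) + c) :
    a k ≤ ε * a 0 := by
  set x₁ : ℝ := Real.log (1/ρ) with hx₁def
  have hx₁ : 0 < x₁ := Real.log_pos (one_lt_one_div hρ0 hρ1)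
  -- basic sequence facts
  have hinv : ∀ j, 0 < a j ∧ a j ≤ a 0 := by
    intro j
    induction j with
    | zero => exact ⟨ha0, le_rfl⟩
    | succ n ih =>
      have hrw : a (n+1) = a n * (ρ + q * a n) := by rw [ha]; ring
      have hq0 : q * a 0 < 1 - ρ := by
        have := (lt_div_iff₀ hq).1 ha0'
        linarith
      have hfac1 : ρ + q * a n < 1 := by nlinarith [ih.2]
      have hfac0 : 0 < ρ + q * a n := by nlinarith [ih.1]
      constructor
      · rw [hrw]; exact mul_pos ih.1 hfac0
      · rw [hrw]; nlinarith [ih.1, ih.2]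
  set σs : ℕ → ℝ := fun j => ρ + q * a j with hσdef
  have hσρ : ∀ j, ρ < σs j := by
    intro j; simp only [hσdef]; nlinarith [(hinv j).1]
  have hσ1 : ∀ j, σs j < 1 := by
    intro j; simp only [hσdef]
    have hq0 : q * a 0 < 1 - ρ := by
      have := (lt_div_iff₀ hq).1 ha0'
      linarith
    nlinarith [(hinv j).2]
  have hσ0 : ∀ j, 0 < σs j := fun j => lt_trans hρ0 (hσρ j)
  have harec : ∀ j, a (j+1) = a j * σs j := by
    intro j; simp only [hσdef]; rw [ha]; ring
  have hσrec : ∀ j, σs (j+1) = ρ + σs j * (σs j - ρ) := by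
    intro j; simp only [hσdef]; rw [ha]; ring
  -- y and d
  set y : ℕ → ℝ := fun j => Real.log (1/(σs j)) with hydef
  set d : ℕ → ℝ := fun j => Real.log (σs j / ρ) with hddef
  have hy0 : ∀ j, 0 < y j := fun j => Real.log_pos (one_lt_one_div (hσ0 j) (hσ1 j))
  have hyx : ∀ j, y j < x₁ := by
    intro j
    apply Real.log_lt_log (one_div_pos.2 (hσ0 j))
    exact one_div_lt_one_div_of_lt hρ0 (hσρ j)
  have hymono : ∀ j, y j < y (j+1) := by
    intro j
    apply Real.log_lt_log (one_div_pos.2 (hσ0 j))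
    have h1 : σs (j+1) < σs j := by
      rw [hσrec j]; nlinarith [hσρ j, hσ1 j]
    exact one_div_lt_one_div_of_lt (hσ0 (j+1)) h1
  have hdy : ∀ j, d j = x₁ - y j := by
    intro j
    simp only [hddef, hydef, hx₁def]
    rw [Real.log_div (hσ0 j).ne' hρ0.ne', Real.log_div one_ne_zero hρ0.ne',
      Real.log_div one_ne_zero (hσ0 j).ne']
    ring
  -- the majorant function
  set Hf : ℝ → ℝ := fun t => (Real.exp (-t) + x₁/2)/(ρ*t) with hHdef
  have hHcont : ∀ u v : ℝ, 0 < u → 0 < v → ContinuousOn Hf (Set.uIcc u v) := by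
    intro u v hu hv
    apply ContinuousOn.div (by fun_prop) (by fun_prop)
    intro t ht
    have h1 : min u v ≤ t := (Set.mem_uIcc.1 ht).elim (fun h => le_trans (min_le_left u v) h.1)
      (fun h => le_trans (min_le_right u v) h.1)
    have ht0 : 0 < t := lt_of_lt_of_le (lt_min hu hv) h1
    exact (mul_pos hρ0 ht0).ne'
  have hHint : ∀ u v : ℝ, 0 < u → 0 < v → IntervalIntegrable Hf volume u v :=
    fun u v hu hv => (hHcont u v hu hv).intervalIntegrable
  have hHnonneg : ∀ t : ℝ, 0 < t → 0 ≤ Hf t := by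
    intro t ht
    simp only [hHdef]
    have h1 : 0 ≤ Real.exp (-t) + x₁/2 := by positivity
    exact div_nonneg h1 (mul_pos hρ0 ht).le
  -- per-step integral bound
  have hstepInt : ∀ j, d (j+1) ≤ ∫ t in (y j)..(y (j+1)), Hf t := by
    intro j
    have h1 := stepIneq ρ (σs j) (σs (j+1)) hρ0 (hσρ j) (hσ1 j) (hσrec j)
    have hexp : Real.exp (-(y (j+1))) = σs (j+1) := by
      simp only [hydef]
      rw [one_div, Real.log_inv, neg_neg, Real.exp_log (hσ0 (j+1))]
    set C : ℝ := (σs (j+1) + x₁/2)/ρ with hCdef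
    have hC0 : 0 ≤ C := by
      apply div_nonneg ?_ hρ0.le
      have := (hσ0 (j+1)).le
      positivity
    have hglow : ∀ t ∈ Set.Icc (y j) (y (j+1)), C * (1/t) ≤ Hf t := by
      intro t ht
      have ht0 : 0 < t := lt_of_lt_of_le (hy0 j) ht.1
      have hexple : σs (j+1) ≤ Real.exp (-t) := by
        rw [← hexp]
        exact Real.exp_le_exp.2 (by linarith [ht.2])
      have e : C * (1/t) = (σs (j+1) + x₁/2)/(ρ*t) := by
        rw [hCdef, div_mul_div_comm, mul_one]
      rw [e]
      simp only [hHdef]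
      have hρt : 0 < ρ*t := mul_pos hρ0 ht0
      exact (div_le_div_iff_of_pos_right hρt).2 (add_le_add_left hexple _)
    have hgint : IntervalIntegrable (fun t => C * (1/t)) volume (y j) (y (j+1)) := by
      apply ContinuousOn.intervalIntegrable
      apply ContinuousOn.mul continuousOn_const
      apply ContinuousOn.div continuousOn_const continuousOn_id
      intro t ht
      have h1 : min (y j) (y (j+1)) ≤ t := (Set.mem_uIcc.1 ht).elim
        (fun h => le_trans (min_le_left _ _) h.1) (fun h => le_trans (min_le_right _ _) h.1)
      exact (lt_of_lt_of_le (lt_min (hy0 j) (hy0 (j+1))) h1).ne'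
    have hmono := intervalIntegral.integral_mono_on (hymono j).le hgint
      (hHint _ _ (hy0 j) (hy0 (j+1))) hglow
    have hzero : (0:ℝ) ∉ Set.uIcc (y j) (y (j+1)) := by
      rw [Set.uIcc_of_le (hymono j).le]
      intro h
      exact absurd h.1 (not_le.2 (hy0 j))
    have heval : ∫ t in (y j)..(y (j+1)), C * (1/t)
        = C * (Real.log (y (j+1)) - Real.log (y j)) := by
      rw [intervalIntegral.integral_const_mul, integral_one_div hzero,
        Real.log_div (hy0 (j+1)).ne' (hy0 j).ne']
    have h2 : d (j+1) ≤ C * (Real.log (y (j+1)) - Real.log (y j)) := by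
      rw [hCdef, div_mul_eq_mul_div, le_div_iff₀ hρ0]
      simp only [hddef, hydef] at h1 ⊢
      nlinarith [h1]
    linarith [hmono, heval.symm.trans_le (le_of_eq rfl), h2, heval ▸ hmono]
  -- sum bound
  have hrange : ∀ n : ℕ, y n ≤ x₁ := fun n => (hyx n).le
  have hsumd : ∀ n : ℕ, ∑ j ∈ Finset.range n, d j ≤ x₁ + ∫ t in (y 0)..x₁, Hf t := by
    intro n
    have hd0 : d 0 ≤ x₁ := by rw [hdy 0]; linarith [hy0 0]
    have hInonneg : ∀ u v : ℝ, 0 < u → u ≤ v → 0 ≤ ∫ t in u..v, Hf t := by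
      intro u v hu huv
      apply intervalIntegral.integral_nonneg huv
      intro t ht
      exact hHnonneg t (lt_of_lt_of_le hu ht.1)
    rcases n with _ | m
    · simp
      have := hInonneg (y 0) x₁ (hy0 0) (hrange 0)
      linarith
    · rw [Finset.sum_range_succ']
      have hadj : ∑ i ∈ Finset.range m, ∫ t in (y i)..(y (i+1)), Hf t
          = ∫ t in (y 0)..(y m), Hf t := by
        apply intervalIntegral.sum_integral_adjacent_intervals
        intro i _
        exact hHint _ _ (hy0 i) (hy0 (i+1))
      have hsum1 : ∑ i ∈ Finset.range m, d (i+1)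
          ≤ ∑ i ∈ Finset.range m, ∫ t in (y i)..(y (i+1)), Hf t :=
        Finset.sum_le_sum (fun i _ => hstepInt i)
      have hext : ∫ t in (y 0)..(y m), Hf t ≤ ∫ t in (y 0)..x₁, Hf t := by
        have hsplit : (∫ t in (y 0)..(y m), Hf t) + ∫ t in (y m)..x₁, Hf t
            = ∫ t in (y 0)..x₁, Hf t :=
          intervalIntegral.integral_add_adjacent_intervals
            (hHint _ _ (hy0 0) (hy0 m)) (hHint _ _ (hy0 m) hx₁)
        have htail : 0 ≤ ∫ t in (y m)..x₁, Hf t := hInonneg (y m) x₁ (hy0 m) (hrange m)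
        linarith
      linarith [hadj ▸ hsum1]
  -- evaluate the integral
  have hE : ∫ t in (y 0)..x₁, Real.exp (-t)/t = E₁ (y 0) - E₁ x₁ := by
    have hf : ∀ s : Set ℝ, s ⊆ Set.Ioi (y 0) → IntegrableOn (fun t => Real.exp (-t)/t) s := by
      intro s hs
      apply IntegrableOn.mono_set ?_ hs
      have hg : IntegrableOn (fun t => Real.exp (-t) / (y 0)) (Set.Ioi (y 0)) := by
        have := (exp_neg_integrableOn_Ioi (y 0) (b := 1) one_pos).div_const (y 0)
        simp at this; exact this
      apply Integrable.mono' hg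
      · apply ContinuousOn.aestronglyMeasurable ?_ measurableSet_Ioi
        apply ContinuousOn.div (by fun_prop) continuousOn_id
        intro t ht
        exact (lt_trans (hy0 0) ht).ne'
      · filter_upwards [ae_restrict_mem measurableSet_Ioi] with t ht
        rw [Real.norm_eq_abs, abs_div, abs_of_pos (Real.exp_pos _),
          abs_of_pos (lt_trans (hy0 0) ht)]
        apply div_le_div_of_nonneg_left (Real.exp_pos _).le (hy0 0) (le_of_lt ht)
    have hsplit : ∫ t in Set.Ioi (y 0), Real.exp (-t)/t
        = (∫ t in Set.Ioc (y 0) x₁, Real.exp (-t)/t) + ∫ t in Set.Ioi x₁, Real.exp (-t)/t := by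
      rw [← Set.Ioc_union_Ioi_eq_Ioi (hrange 0)]
      rw [MeasureTheory.setIntegral_union (Set.Ioc_disjoint_Ioi le_rfl) measurableSet_Ioi
        (hf _ Set.Ioc_subset_Ioi_self)
        (hf _ (Set.Ioi_subset_Ioi (hrange 0)))]
    rw [hE₁, hE₁, intervalIntegral.integral_of_le (hrange 0)]
    rw [hsplit]
    ring
  have hIval : ∫ t in (y 0)..x₁, Hf t
      = (E₁ (y 0) - E₁ x₁)/ρ + (x₁/(2*ρ))*(Real.log x₁ - Real.log (y 0)) := by
    have hfadd : ∀ t : ℝ, Hf t = (1/ρ)*(Real.exp (-t)/t) + (x₁/(2*ρ))*(1/t) := by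
      intro t
      simp only [hHdef]
      rcases eq_or_ne t 0 with rfl | ht
      · simp
      · field_simp
    have hint1 : IntervalIntegrable (fun t => (1/ρ)*(Real.exp (-t)/t)) volume (y 0) x₁ := by
      apply ContinuousOn.intervalIntegrable
      apply ContinuousOn.mul continuousOn_const
      apply ContinuousOn.div (by fun_prop) continuousOn_id
      intro t ht
      have h1 : min (y 0) x₁ ≤ t := (Set.mem_uIcc.1 ht).elim
        (fun h => le_trans (min_le_left _ _) h.1) (fun h => le_trans (min_le_right _ _) h.1)
      exact (lt_of_lt_of_le (lt_min (hy0 0) hx₁) h1).ne'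
    have hint2 : IntervalIntegrable (fun t => (x₁/(2*ρ))*(1/t)) volume (y 0) x₁ := by
      apply ContinuousOn.intervalIntegrable
      apply ContinuousOn.mul continuousOn_const
      apply ContinuousOn.div continuousOn_const continuousOn_id
      intro t ht
      have h1 : min (y 0) x₁ ≤ t := (Set.mem_uIcc.1 ht).elim
        (fun h => le_trans (min_le_left _ _) h.1) (fun h => le_trans (min_le_right _ _) h.1)
      exact (lt_of_lt_of_le (lt_min (hy0 0) hx₁) h1).ne'
    have hzero : (0:ℝ) ∉ Set.uIcc (y 0) x₁ := by
      rw [Set.uIcc_of_le (hrange 0)]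
      intro h
      exact absurd h.1 (not_le.2 (hy0 0))
    calc ∫ t in (y 0)..x₁, Hf t
        = ∫ t in (y 0)..x₁, ((1/ρ)*(Real.exp (-t)/t) + (x₁/(2*ρ))*(1/t)) := by
          apply intervalIntegral.integral_congr
          intro t _
          exact hfadd t
      _ = (∫ t in (y 0)..x₁, (1/ρ)*(Real.exp (-t)/t))
            + ∫ t in (y 0)..x₁, (x₁/(2*ρ))*(1/t) :=
          intervalIntegral.integral_add hint1 hint2
      _ = (1/ρ)*(∫ t in (y 0)..x₁, Real.exp (-t)/t)
            + (x₁/(2*ρ))*∫ t in (y 0)..x₁, 1/t := by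
          rw [intervalIntegral.integral_const_mul, intervalIntegral.integral_const_mul]
      _ = (E₁ (y 0) - E₁ x₁)/ρ + (x₁/(2*ρ))*(Real.log x₁ - Real.log (y 0)) := by
          rw [hE, integral_one_div hzero, Real.log_div hx₁.ne' (hy0 0).ne']
          ring
  -- identify x₀ with y 0
  have hρτ : ρ + τ * (1 - ρ) = σs 0 := by
    simp only [hσdef]
    rw [hτ, div_mul_cancel₀ _ (by linarith : (1:ℝ) - ρ ≠ 0)]
    ring
  have hcrw : c = (E₁ (y 0) - E₁ x₁)/(ρ*x₁) + (1/(2*ρ))*(Real.log x₁ - Real.log (y 0)) + 1 := by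
    rw [hc, hρτ]
    have : Real.log (1/σs 0) = y 0 := by simp only [hydef]
    rw [this]
    rw [Real.log_div hx₁.ne' (hy0 0).ne']
  -- log of a k
  have hlogn : ∀ n, Real.log (a n) = Real.log (a 0) + ∑ j ∈ Finset.range n, Real.log (σs j) := by
    intro n
    induction n with
    | zero => simp
    | succ m ih =>
      rw [harec m, Real.log_mul (hinv m).1.ne' (hσ0 m).ne', Finset.sum_range_succ, ih]
      ring
  have hlogσd : ∀ j, Real.log (σs j) = Real.log ρ + d j := by
    intro j
    simp only [hddef]
    rw [Real.log_div (hσ0 j).ne' hρ0.ne']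
    ring
  have hlogρ : Real.log ρ = -x₁ := by
    rw [hx₁def, Real.log_div one_ne_zero hρ0.ne', Real.log_one]
    ring
  have hlogk : Real.log (a k) = Real.log (a 0) - k*x₁ + ∑ j ∈ Finset.range k, d j := by
    rw [hlogn k]
    have : ∑ j ∈ Finset.range k, Real.log (σs j)
        = ∑ j ∈ Finset.range k, (Real.log ρ + d j) := by
      apply Finset.sum_congr rfl
      intro j _
      exact hlogσd j
    rw [this, Finset.sum_add_distrib, Finset.sum_const, Finset.card_range, hlogρ]
    push_cast
    ring
  -- conclude
  have hcx : c * x₁ = (E₁ (y 0) - E₁ x₁)/ρ + (x₁/(2*ρ))*(Real.log x₁ - Real.log (y 0)) + x₁ := by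
    rw [hcrw]
    field_simp
  have hkx : Real.log (1/ε) + c * x₁ ≤ k * x₁ := by
    have h1 : (Real.log (1/ε)/x₁ + c) * x₁ ≤ (k:ℝ) * x₁ :=
      mul_le_mul_of_nonneg_right hk hx₁.le
    rw [add_mul, div_mul_cancel₀ _ hx₁.ne'] at h1
    exact h1
  have hfinal : Real.log (a k) ≤ Real.log (ε * a 0) := by
    have h1 : Real.log (a k) ≤ Real.log (a 0) - k*x₁ + c*x₁ := by
      rw [hlogk, hcx]
      have := hsumd k
      rw [hIval] at this
      linarith
    have h2 : Real.log (ε * a 0) = Real.log ε + Real.log (a 0) :=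
      Real.log_mul hε0.ne' ha0.ne'
    have h3 : Real.log (1/ε) = -Real.log ε := by
      rw [Real.log_div one_ne_zero hε0.ne', Real.log_one]
      ring
    rw [h3] at hkx
    rw [h2]
    linarith
  calc a k = Real.exp (Real.log (a k)) := (Real.exp_log (hinv k).1).symm
    _ ≤ Real.exp (Real.log (ε * a 0)) := Real.exp_le_exp.2 hfinal
    _ = ε * a 0 := Real.exp_log (by positivity)
end

section
/- Let T ∈ ℝ^{n×n} be symmetric with spectral radius ρ(T) < 1, let q > 0, and let q: ℝⁿ → ℝⁿ satisfy ‖q(δ)‖ ≤ q‖δ‖² for all δ. Define δ^{(k+1)} = T δ^{(k)} + q(δ^{(k)}). If ‖δ^{(0)}‖ < (1−ρ(T))/q, then ‖δ^{(k)}‖ → 0 as k → ∞; moreover ‖δ^{(k)}‖ ≤ (ρ(T) + τ(1−ρ(T)))^k ‖δ^{(0)}‖ for all k, where τ = q‖δ^{(0)}‖/(1−ρ(T)). -/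
open Module End in
lemma clm_op_norm_le_of_spectralRadius {n : ℕ}
    (T : EuclideanSpace ℝ (Fin n) →L[ℝ] EuclideanSpace ℝ (Fin n))
    (hTsym : IsSelfAdjoint T) (ρ : ℝ) (hρ0 : 0 ≤ ρ)
    (hρ : spectralRadius ℝ T = ENNReal.ofReal ρ)
    (x : EuclideanSpace ℝ (Fin n)) : ‖T x‖ ≤ ρ * ‖x‖ := by
  have hsym : (T : EuclideanSpace ℝ (Fin n) →ₗ[ℝ] EuclideanSpace ℝ (Fin n)).IsSymmetric :=
    hTsym.isSymmetric
  have hn : Module.finrank ℝ (EuclideanSpace ℝ (Fin n)) = n := finrank_euclideanSpace_fin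
  set b := hsym.eigenvectorBasis hn with hb
  set μ := hsym.eigenvalues hn with hμ
  -- each eigenvalue has absolute value ≤ ρ
  have hev : ∀ i, |μ i| ≤ ρ := by
    intro i
    have hmem : μ i ∈ spectrum ℝ T := by
      obtain ⟨hv1, hv2⟩ := hsym.hasEigenvector_eigenvectorBasis hn i
      rw [spectrum.mem_iff]
      intro hu
      have hTv : T (b i) = μ i • b i := Module.End.mem_eigenspace_iff.mp hv1
      have hker : (algebraMap ℝ (EuclideanSpace ℝ (Fin n) →L[ℝ] EuclideanSpace ℝ (Fin n)) (μ i) - T) (b i) = 0 := by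
        rw [ContinuousLinearMap.sub_apply, Algebra.algebraMap_eq_smul_one,
          ContinuousLinearMap.smul_apply, ContinuousLinearMap.one_apply, hTv, sub_self]
      obtain ⟨u, hu⟩ := hu
      have h2 : (↑u⁻¹ * ↑u : EuclideanSpace ℝ (Fin n) →L[ℝ] EuclideanSpace ℝ (Fin n)) (b i) = b i := by
        rw [u.inv_mul]; rfl
      rw [ContinuousLinearMap.mul_apply, hu, hker, map_zero] at h2
      exact hv2 h2.symm
    have h1 : (‖μ i‖₊ : ENNReal) ≤ spectralRadius ℝ T :=
      le_iSup₂ (f := fun k (_ : k ∈ spectrum ℝ T) => (‖k‖₊ : ENNReal)) (μ i) hmem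
    rw [hρ] at h1
    have h2 := ENNReal.toReal_mono ENNReal.ofReal_ne_top h1
    simpa [ENNReal.toReal_ofReal hρ0] using h2
  -- norm bound via the eigenbasis
  have hTx : ‖T x‖ ^ 2 ≤ ρ ^ 2 * ‖x‖ ^ 2 := by
    have hnorm : ∀ y : EuclideanSpace ℝ (Fin n), ‖y‖ ^ 2 = ∑ i, (b.repr y i) ^ 2 := by
      intro y
      rw [← b.repr.norm_map y, EuclideanSpace.norm_eq, Real.sq_sqrt (by positivity)]
      simp [Real.norm_eq_abs, sq_abs]
    rw [hnorm, hnorm]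
    rw [Finset.mul_sum]
    apply Finset.sum_le_sum
    intro i _
    have heq : b.repr (T x) i = μ i * b.repr x i :=
      hsym.eigenvectorBasis_apply_self_apply hn x i
    rw [heq]
    have h2 : (μ i) ^ 2 ≤ ρ ^ 2 := by
      have := hev i
      nlinarith [abs_nonneg (μ i), sq_abs (μ i)]
    nlinarith [sq_nonneg (b.repr x i), sq_nonneg (μ i * b.repr x i)]
  have h3 : 0 ≤ ρ * ‖x‖ := by positivity
  nlinarith [norm_nonneg (T x)]

theorem symmetric_vector_convergence
    (n : ℕ)
    (T : EuclideanSpace ℝ (Fin n) →L[ℝ] EuclideanSpace ℝ (Fin n))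
    (hTsym : IsSelfAdjoint T)
    (ρ : ℝ) (hρ0 : 0 ≤ ρ) (hρ1 : ρ < 1)
    (hρ : spectralRadius ℝ T = ENNReal.ofReal ρ)
    (q : ℝ) (hq : 0 < q)
    (Q : EuclideanSpace ℝ (Fin n) → EuclideanSpace ℝ (Fin n))
    (hQ : ∀ δ : EuclideanSpace ℝ (Fin n), ‖Q δ‖ ≤ q * ‖δ‖ ^ 2)
    (δ : ℕ → EuclideanSpace ℝ (Fin n))
    (hδ : ∀ k, δ (k + 1) = T (δ k) + Q (δ k))
    (h0 : ‖δ 0‖ < (1 - ρ) / q)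
    (τ : ℝ) (hτ : τ = q * ‖δ 0‖ / (1 - ρ)) :
    Filter.Tendsto (fun k => ‖δ k‖) Filter.atTop (nhds 0) ∧
    ∀ k : ℕ, ‖δ k‖ ≤ (ρ + τ * (1 - ρ)) ^ k * ‖δ 0‖ := by
  have hT := clm_op_norm_le_of_spectralRadius T hTsym ρ hρ0 hρ
  have h1ρ : (0:ℝ) < 1 - ρ := by linarith
  have ha0 : 0 ≤ ‖δ 0‖ := norm_nonneg _
  have hqa0 : q * ‖δ 0‖ < 1 - ρ := by
    rw [lt_div_iff₀ hq] at h0; linarith [h0]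
  have hτeq : τ * (1 - ρ) = q * ‖δ 0‖ := by
    rw [hτ]; field_simp
  set r := ρ + τ * (1 - ρ) with hr
  have hτ0 : 0 ≤ τ := by rw [hτ]; positivity
  have hr0 : 0 ≤ r := by positivity
  have hr1 : r < 1 := by rw [hr, hτeq]; linarith
  have bound : ∀ k, ‖δ k‖ ≤ r ^ k * ‖δ 0‖ := by
    intro k
    induction k with
    | zero => simp
    | succ k ih =>
      have hrk : r ^ k ≤ 1 := pow_le_one₀ hr0 hr1.le
      have hk0 : 0 ≤ ‖δ k‖ := norm_nonneg _
      have hstep : ‖δ (k+1)‖ ≤ ρ * ‖δ k‖ + q * ‖δ k‖ ^ 2 := by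
        rw [hδ k]
        calc ‖T (δ k) + Q (δ k)‖ ≤ ‖T (δ k)‖ + ‖Q (δ k)‖ := norm_add_le _ _
        _ ≤ ρ * ‖δ k‖ + q * ‖δ k‖ ^ 2 := add_le_add (hT _) (hQ _)
      have hle : ‖δ k‖ ≤ ‖δ 0‖ := le_trans ih (by nlinarith)
      have : ρ * ‖δ k‖ + q * ‖δ k‖ ^ 2 ≤ r * (r ^ k * ‖δ 0‖) := by
        have h5 : q * ‖δ k‖ ≤ τ * (1 - ρ) := by rw [hτeq]; nlinarith
        nlinarith [mul_nonneg hr0 (mul_nonneg (pow_nonneg hr0 k) ha0)]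
      calc ‖δ (k+1)‖ ≤ ρ * ‖δ k‖ + q * ‖δ k‖ ^ 2 := hstep
      _ ≤ r * (r ^ k * ‖δ 0‖) := this
      _ = r ^ (k+1) * ‖δ 0‖ := by ring
  refine ⟨?_, bound⟩
  have htend : Filter.Tendsto (fun k : ℕ => r ^ k * ‖δ 0‖) Filter.atTop (nhds 0) := by
    rw [show (0:ℝ) = 0 * ‖δ 0‖ by ring]
    exact (tendsto_pow_atTop_nhds_zero_of_lt_one hr0 hr1).mul_const _
  exact squeeze_zero (fun k => norm_nonneg _) bound htend
end
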